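/- Let E be a finite-dimensional real inner product space, let f, g : E → ℝ be twice continuously differentiable, and let α, β, γ ∈ ℝ. Suppose x : ℝ → E is twice differentiable and λ : ℝ → ℝ is differentiable, and for every t they satisfy the proportional-integral-derivative multiplier method equations ẋ(t) = -∇f(x(t)) - λ(t)·∇g(x(t)) and λ̇(t) = α·g(x(t)) + β·(d/dt)[g(x(t))] + γ·(d²/dt²)[g(x(t))]. Then for every t, B(t)(ẍ(t)) + (A(t) + β·∇g(x(t))∇g(x(t))ᵀ)(ẋ(t)) + (α·g(x(t)) + γ·⟨ẋ(t), ∇²g(x(t))(ẋ(t))⟩)·∇g(x(t)) = 0, where A(t) = ∇²f(x(t)) + λ(t)·∇²g(x(t)) and B(t) = I + γ·∇g(x(t))∇g(x(t))ᵀ. -/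

import Mathlib

/-!
Differentiating the primal equation `ẋ = -∇f(x) - λ ∇g(x)` once more gives
`ẍ + ∇²f(x) ẋ + λ ∇²g(x) ẋ + λ̇ ∇g(x) = 0`. By the chain rule the multiplier equation reads
`λ̇ = α g(x) + β ⟨∇g(x), ẋ⟩ + γ (⟨∇g(x), ẍ⟩ + ⟨∇²g(x) ẋ, ẋ⟩)`, and substituting this value of `λ̇`
regroups the first identity into the claimed second-order equation.
-/

open RealInnerProductSpace

section GradientCalculus

variable {E : Type*} [NormedAddCommGroup E] [InnerProductSpace ℝ E] [CompleteSpace E]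

theorem ContDiff.gradient {f : E → ℝ} {n : WithTop ℕ∞} (hf : ContDiff ℝ (n + 1) f) :
    ContDiff ℝ n (gradient f) :=
  (InnerProductSpace.toDual ℝ E).symm.toContinuousLinearEquiv.contDiff.comp
    (hf.fderiv_right le_rfl)

theorem HasGradientAt.comp_hasDerivAt {g : E → ℝ} {g' v : E} {x : ℝ → E} {t : ℝ}
    (hg : HasGradientAt g g' (x t)) (hx : HasDerivAt x v t) :
    HasDerivAt (fun s => g (x s)) ⟪g', v⟫ t :=
  hg.hasFDerivAt.comp_hasDerivAt t hx

theorem hasDerivAt_inner_gradient_comp {g : E → ℝ} {x y : ℝ → E} {v w : E} {t : ℝ}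
    (hg : DifferentiableAt ℝ (gradient g) (x t)) (hx : HasDerivAt x v t)
    (hy : HasDerivAt y w t) :
    HasDerivAt (fun s => ⟪gradient g (x s), y s⟫)
      (⟪gradient g (x t), w⟫ + ⟪fderiv ℝ (gradient g) (x t) v, y t⟫) t :=
  (hg.hasFDerivAt.comp_hasDerivAt t hx).inner ℝ hy

theorem deriv_deriv_comp_eq_inner_gradient {g : E → ℝ} {x : ℝ → E} {t : ℝ}
    (hg : Differentiable ℝ g) (hg' : DifferentiableAt ℝ (gradient g) (x t))
    (hx : Differentiable ℝ x) (hx' : DifferentiableAt ℝ (deriv x) t) :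
    deriv (deriv fun s => g (x s)) t = ⟪gradient g (x t), deriv (deriv x) t⟫
      + ⟪fderiv ℝ (gradient g) (x t) (deriv x t), deriv x t⟫ := by
  have hderiv : deriv (fun s => g (x s)) = fun s => ⟪gradient g (x s), deriv x s⟫ :=
    funext fun s => ((hg (x s)).hasGradientAt.comp_hasDerivAt (hx s).hasDerivAt).deriv
  rw [hderiv]
  exact (hasDerivAt_inner_gradient_comp hg' (hx t).hasDerivAt hx'.hasDerivAt).deriv

theorem hasDerivAt_deriv_of_deriv_eq_neg_gradient_sub_smul_gradient
    {f g : E → ℝ} {x : ℝ → E} {lam : ℝ → ℝ} {t : ℝ}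
    (hf : DifferentiableAt ℝ (gradient f) (x t)) (hg : DifferentiableAt ℝ (gradient g) (x t))
    (hx : DifferentiableAt ℝ x t) (hlam : DifferentiableAt ℝ lam t)
    (hode : ∀ s, deriv x s = -gradient f (x s) - lam s • gradient g (x s)) :
    HasDerivAt (deriv x)
      (-fderiv ℝ (gradient f) (x t) (deriv x t)
        - (lam t • fderiv ℝ (gradient g) (x t) (deriv x t)
          + deriv lam t • gradient g (x t))) t := by
  have hrhs := (hf.hasFDerivAt.comp_hasDerivAt t hx.hasDerivAt).neg.sub
    (hlam.hasDerivAt.smul (hg.hasFDerivAt.comp_hasDerivAt t hx.hasDerivAt))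
  exact hrhs.congr_of_eventuallyEq (.of_forall hode)

end GradientCalculus

theorem pid_multiplier_dynamics_general
    {E : Type*} [NormedAddCommGroup E] [InnerProductSpace ℝ E] [FiniteDimensional ℝ E]
    (f g : E → ℝ) (hf : ContDiff ℝ 2 f) (hg : ContDiff ℝ 2 g)
    (α β γ : ℝ) (x : ℝ → E) (lam : ℝ → ℝ)
    (hx : Differentiable ℝ x)
    (hlam : Differentiable ℝ lam)
    (hode1 : ∀ t, deriv x t = -gradient f (x t) - lam t • gradient g (x t))
    (hode2 : ∀ t, deriv lam t
        = α * g (x t) + β * deriv (fun s => g (x s)) t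
          + γ * deriv (deriv (fun s => g (x s))) t) :
    ∀ t, (deriv (deriv x) t
            + (γ * ⟪gradient g (x t), deriv (deriv x) t⟫) • gradient g (x t))
        + (fderiv ℝ (gradient f) (x t) (deriv x t)
            + lam t • fderiv ℝ (gradient g) (x t) (deriv x t)
            + (β * ⟪gradient g (x t), deriv x t⟫) • gradient g (x t))
        + (α * g (x t)
            + γ * ⟪deriv x t, fderiv ℝ (gradient g) (x t) (deriv x t)⟫)
          • gradient g (x t) = 0 := by
  intro t
  have hgd : Differentiable ℝ g := hg.differentiable (by norm_num)
  have hGf : Differentiable ℝ (gradient f) := (hf.gradient (n := 1)).differentiable one_ne_zero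
  have hGg : Differentiable ℝ (gradient g) := (hg.gradient (n := 1)).differentiable one_ne_zero
  have hxx := hasDerivAt_deriv_of_deriv_eq_neg_gradient_sub_smul_gradient
    (hGf (x t)) (hGg (x t)) (hx t) (hlam t) hode1
  have hlam' : deriv lam t = α * g (x t) + β * ⟪gradient g (x t), deriv x t⟫
      + γ * (⟪gradient g (x t), deriv (deriv x) t⟫
        + ⟪fderiv ℝ (gradient g) (x t) (deriv x t), deriv x t⟫) := by
    rw [hode2 t, deriv_deriv_comp_eq_inner_gradient hgd (hGg (x t)) hx hxx.differentiableAt,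
      ((hgd (x t)).hasGradientAt.comp_hasDerivAt (hx t).hasDerivAt).deriv]
  rw [real_inner_comm (fderiv ℝ (gradient g) (x t) (deriv x t))]
  linear_combination (norm := module) hxx.deriv - hlam' • gradient g (x t)

/-- Second-order dynamics of the proportional-integral-derivative multiplier method:
if `ẋ = -∇f(x) - λ·∇g(x)` and `λ̇ = α·g(x) + β·(d/dt)[g(x)] + γ·(d²/dt²)[g(x)]`, then
`B(ẍ) + (A + β·∇g∇gᵀ)(ẋ) + (α·g(x) + γ·⟨ẋ, ∇²g(x)(ẋ)⟩)·∇g(x) = 0`,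
where `A = ∇²f(x) + λ·∇²g(x)` and `B = I + γ·∇g(x)∇g(x)ᵀ`. -/
theorem pid_multiplier_dynamics
    {E : Type*} [NormedAddCommGroup E] [InnerProductSpace ℝ E] [FiniteDimensional ℝ E]
    (f g : E → ℝ) (hf : ContDiff ℝ 2 f) (hg : ContDiff ℝ 2 g)
    (α β γ : ℝ) (x : ℝ → E) (lam : ℝ → ℝ)
    (hx : Differentiable ℝ x) (hx' : Differentiable ℝ (deriv x))
    (hlam : Differentiable ℝ lam)
    (hode1 : ∀ t, deriv x t = -gradient f (x t) - lam t • gradient g (x t))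
    (hode2 : ∀ t, deriv lam t
        = α * g (x t) + β * deriv (fun s => g (x s)) t
          + γ * deriv (deriv (fun s => g (x s))) t) :
    ∀ t, (deriv (deriv x) t
            + (γ * ⟪gradient g (x t), deriv (deriv x) t⟫) • gradient g (x t))
        + (fderiv ℝ (gradient f) (x t) (deriv x t)
            + lam t • fderiv ℝ (gradient g) (x t) (deriv x t)
            + (β * ⟪gradient g (x t), deriv x t⟫) • gradient g (x t))
        + (α * g (x t)
            + γ * ⟪deriv x t, fderiv ℝ (gradient g) (x t) (deriv x t)⟫)
          • gradient g (x t) = 0 :=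
  pid_multiplier_dynamics_general f g hf hg α β γ x lam hx hlam hode1 hode2
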